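/- Let P(X) = Xⁿ + a₁Xⁿ⁻¹ + ⋯ + aₙ ∈ ℤ[X] be a monic irreducible polynomial of degree n ≥ 1 all of whose complex roots are real and have absolute value strictly less than 2. Then there exists an integer N ≥ 3 such that zⁿ · P(z + 1/z) = Φ_N(z) for every nonzero z ∈ ℂ (so Xⁿ·P(X + 1/X) equals the N-th cyclotomic polynomial), and every root of P is of the form ζ + ζ⁻¹ = 2cos(2mπ/N) for some primitive N-th root of unity ζ (i.e., some integer m with 1 ≤ m < N and gcd(m, N) = 1). Moreover, the maximal absolute value of the roots of P equals 2cos(2π/N) if N is even and 2cos(π/N) if N is odd. -/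

import Mathlib

open Polynomial Real
open scoped IntermediateField

/-!
Put `Q(X) = Xⁿ P(X + X⁻¹) ∈ ℤ[X]` (`Polynomial.joukowski`), monic of degree `2n`. A root `ζ` of `Q`
satisfies `ζ + ζ⁻¹ = α` for a real root `α` of `P` with `|α| < 2`, so `ζ` is a non-real point of the
unit circle. By Kronecker's theorem `ζ` is a root of unity, of order `N` say, and `Φ_N ∣ Q`. As
`ζ ∉ ℚ(α) ⊆ ℝ`, we get `φ(N) = [ℚ(ζ) : ℚ] ≥ 2 [ℚ(α) : ℚ] = deg Q`, hence `Q = Φ_N`. The roots of `P`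
are then the numbers `2 cos (2πi/N)` with `i` prime to `N`; since `2i` lies at distance at least
`2` (for `N` even) or `1` (for `N` odd) from every multiple of `N`, the largest of their absolute
values is `2 cos (2π/N)`, resp. `2 cos (π/N)`.
-/

namespace Polynomial

variable {R : Type*} [CommRing R]

noncomputable def joukowski (P : R[X]) : R[X] :=
  ∑ k ∈ Finset.range (P.natDegree + 1), C (P.coeff k) * (X ^ 2 + 1) ^ k * X ^ (P.natDegree - k)

theorem aeval_joukowski {K : Type*} [Field K] [Algebra R K] (P : R[X]) {z : K} (hz : z ≠ 0) :
    aeval z P.joukowski = z ^ P.natDegree * aeval (z + z⁻¹) P := by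
  have hterm : ∀ k ≤ P.natDegree, (z ^ 2 + 1) ^ k * z ^ (P.natDegree - k)
      = z ^ P.natDegree * (z + z⁻¹) ^ k := fun k hk => by
    rw [show z ^ 2 + 1 = z * (z + z⁻¹) by field_simp, mul_pow, mul_right_comm, ← pow_add,
      Nat.add_sub_cancel' hk]
  simp only [joukowski, map_sum, map_mul, map_pow, aeval_C, aeval_X, map_add, map_one,
    aeval_eq_sum_range (x := z + z⁻¹), Finset.mul_sum]
  refine Finset.sum_congr rfl fun k hk => ?_
  rw [mul_assoc, hterm k (Finset.mem_range_succ_iff.mp hk), Algebra.smul_def]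
  ring

theorem aeval_joukowski_eq_zero_iff {K : Type*} [Field K] [Algebra R K] {P : R[X]} {z : K}
    (hz : z ≠ 0) : aeval z P.joukowski = 0 ↔ aeval (z + z⁻¹) P = 0 := by
  rw [aeval_joukowski P hz, mul_eq_zero, or_iff_right (pow_ne_zero _ hz)]

section Monic

variable [Nontrivial R] {P : R[X]}

theorem monic_and_natDegree_X_sq_add_one_pow (n : ℕ) :
    ((X ^ 2 + 1 : R[X]) ^ n).Monic ∧ ((X ^ 2 + 1 : R[X]) ^ n).natDegree = 2 * n :=
  ⟨by monicity!, by compute_degree! <;> omega⟩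

theorem degree_joukowski_sub_lt (hP : P.Monic) :
    (P.joukowski - (X ^ 2 + 1) ^ P.natDegree).degree
      < ((X ^ 2 + 1 : R[X]) ^ P.natDegree).degree := by
  obtain ⟨hmonic, hdeg⟩ := monic_and_natDegree_X_sq_add_one_pow (R := R) P.natDegree
  rw [degree_eq_natDegree hmonic.ne_zero, hdeg, joukowski, Finset.sum_range_succ,
    hP.coeff_natDegree, C_1, one_mul, Nat.sub_self, pow_zero, mul_one, add_sub_cancel_right]
  refine (degree_sum_le _ _).trans_lt ((Finset.sup_lt_iff (WithBot.bot_lt_coe _)).2 fun k hk => ?_)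
  have hk := Finset.mem_range.mp hk
  have : (C (P.coeff k) * (X ^ 2 + 1 : R[X]) ^ k * X ^ (P.natDegree - k)).natDegree
      ≤ 2 * k + (P.natDegree - k) := by
    compute_degree
    omega
  exact degree_le_natDegree.trans_lt (by exact_mod_cast (by omega))

theorem Monic.joukowski (hP : P.Monic) : P.joukowski.Monic := by
  simpa using (monic_and_natDegree_X_sq_add_one_pow P.natDegree).1.add_of_left
    (degree_joukowski_sub_lt hP)

theorem Monic.natDegree_joukowski (hP : P.Monic) : P.joukowski.natDegree = 2 * P.natDegree := by
  rw [← add_sub_cancel ((X ^ 2 + 1) ^ P.natDegree) P.joukowski,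
    natDegree_add_eq_left_of_degree_lt (degree_joukowski_sub_lt hP),
    (monic_and_natDegree_X_sq_add_one_pow P.natDegree).2]

end Monic

end Polynomial

theorem exists_ne_zero_add_inv_eq {K : Type*} [Field K] [IsAlgClosed K] (a : K) :
    ∃ z ≠ 0, z + z⁻¹ = a := by
  have hdeg : (X ^ 2 - C a * X + 1 : K[X]).degree = 2 := by compute_degree!
  obtain ⟨z, hz⟩ := IsAlgClosed.exists_root (X ^ 2 - C a * X + 1) (by rw [hdeg]; decide)
  simp only [IsRoot, eval_add, eval_sub, eval_pow, eval_mul, eval_X, eval_C, eval_one] at hz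
  have hz0 : z ≠ 0 := by rintro rfl; simp at hz
  exact ⟨z, hz0, by field_simp; linear_combination hz⟩

theorem Complex.norm_eq_one_and_im_ne_zero_of_add_inv_eq {z a : ℂ} (hz : z ≠ 0) (hreal : a.im = 0)
    (hlt : ‖a‖ < 2) (h : z + z⁻¹ = a) : ‖z‖ = 1 ∧ z.im ≠ 0 := by
  have ha : |a.re| < 2 := (abs_re_le_norm a).trans_lt hlt
  rw [← re_add_im a, hreal, ofReal_zero, zero_mul, add_zero] at h
  set a := a.re
  have hquad : z ^ 2 - a * z + 1 = 0 := by field_simp at h; linear_combination h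
  have hre : z.re ^ 2 - z.im ^ 2 - a * z.re + 1 = 0 := by
    linear_combination (by simpa [sq] using congrArg Complex.re hquad :
      z.re * z.re - z.im * z.im - a * z.re + 1 = 0)
  have him : z.im * (2 * z.re - a) = 0 := by
    linear_combination (by simpa [sq] using congrArg Complex.im hquad :
      z.re * z.im + z.im * z.re - a * z.im = 0)
  have ha2 : a ^ 2 < 4 := by nlinarith [abs_lt.mp ha]
  have him0 : z.im ≠ 0 := by
    intro h0
    rw [h0] at hre
    nlinarith [sq_nonneg (2 * z.re - a)]
  have hre' : 2 * z.re = a := by linarith [(mul_eq_zero.mp him).resolve_left him0]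
  have hnorm : ‖z‖ ^ 2 = 1 := by
    rw [Complex.sq_norm, Complex.normSq_apply]
    linear_combination -hre + z.re * hre'
  exact ⟨by nlinarith [norm_nonneg z], him0⟩

theorem Polynomial.Monic.isOfFinOrder_of_aeval_eq_zero {Q : ℤ[X]} (hQ : Q.Monic)
    (hroots : ∀ w : ℂ, aeval w Q = 0 → ‖w‖ ≤ 1) {z : ℂ} (hz0 : z ≠ 0) (hz : aeval z Q = 0) :
    IsOfFinOrder z := by
  have hzint : IsIntegral ℤ z := ⟨Q, hQ, by rwa [← aeval_def]⟩
  let K := ℚ⟮z⟯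
  have : FiniteDimensional ℚ K := IntermediateField.adjoin.finiteDimensional hzint.tower_top
  have : NumberField K := ⟨⟩
  let x : K := IntermediateField.AdjoinSimple.gen ℚ z
  have hxz : algebraMap K ℂ x = z := rfl
  have hx : aeval x Q = 0 := (algebraMap K ℂ).injective <| by
    rw [← aeval_algebraMap_apply, hxz, hz, map_zero]
  obtain ⟨m, hm, hxm⟩ := NumberField.Embeddings.pow_eq_one_of_norm_le_one K ℂ (x := x)
    (by rintro h; exact hz0 (by rw [← hxz, h, map_zero]))
    ((isIntegral_algebraMap_iff (algebraMap K ℂ).injective).mp hzint)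
    fun φ => hroots _ (by rw [← φ.toIntAlgHom_apply, aeval_algHom_apply, hx, map_zero])
  exact isOfFinOrder_iff_pow_eq_one.mpr ⟨m, hm, by rw [← hxz, ← map_pow, hxm, map_one]⟩

theorem Complex.im_eq_zero_of_mem_adjoin_simple {a z : ℂ} (ha : a.im = 0) (hz : z ∈ ℚ⟮a⟯) :
    z.im = 0 := by
  have hle : ℚ⟮a⟯ ≤ (Complex.ofRealAm.restrictScalars ℚ).fieldRange :=
    IntermediateField.adjoin_simple_le_iff.mpr ⟨a.re, Complex.ext (by simp) (by simp [ha])⟩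
  obtain ⟨r, rfl⟩ := hle hz
  simp

theorem two_mul_natDegree_minpoly_le {F E : Type*} [Field F] [Field E] [Algebra F E] {x y : E}
    (hy : IsIntegral F y) (hxy : x ∈ F⟮y⟯) (hyx : y ∉ F⟮x⟯) :
    2 * (minpoly F x).natDegree ≤ (minpoly F y).natDegree := by
  have := IntermediateField.adjoin.finiteDimensional hy
  have hle : F⟮x⟯ ≤ F⟮y⟯ := IntermediateField.adjoin_simple_le_iff.mpr hxy
  have hx : IsIntegral F x := (IsIntegral.of_finite F (⟨x, hxy⟩ : F⟮y⟯)).map (F⟮y⟯).val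
  rw [← IntermediateField.adjoin.finrank hx, ← IntermediateField.adjoin.finrank hy]
  obtain ⟨c, hc⟩ := IntermediateField.finrank_dvd_of_le_right hle
  have hc1 : c ≠ 1 := by
    rintro rfl
    exact hyx (IntermediateField.eq_of_le_of_finrank_eq hle (by rw [hc, mul_one]) ▸
      IntermediateField.mem_adjoin_simple_self F y)
  have hc0 : c ≠ 0 := by
    rintro rfl
    exact Module.finrank_pos.ne' (by rw [hc, mul_zero])
  rw [hc, mul_comm 2]
  exact Nat.mul_le_mul_left _ (show 2 ≤ c by omega)

theorem Real.abs_cos_le_cos_of_le_of_le_pi_sub {δ θ : ℝ} (hδ : 0 ≤ δ) (h₁ : δ ≤ θ)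
    (h₂ : θ ≤ π - δ) : |cos θ| ≤ cos δ := by
  have hlow : cos (π - δ) ≤ cos θ := cos_le_cos_of_nonneg_of_le_pi (by linarith) (by linarith) h₂
  rw [cos_pi_sub] at hlow
  exact abs_le.mpr ⟨by linarith, cos_le_cos_of_nonneg_of_le_pi hδ (by linarith) h₁⟩

theorem Real.abs_cos_pi_mul_div_le {j : ℤ} {N d : ℕ} (hd : 2 * d ≤ N)
    (hj : ∀ k : ℤ, (d : ℤ) ≤ |j - k * N|) : |cos (π * j / N)| ≤ cos (π * d / N) := by
  rcases Nat.eq_zero_or_pos N with rfl | hN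
  · simp
  have hNR : (0 : ℝ) < N := Nat.cast_pos.mpr hN
  have hNZ : (0 : ℤ) < N := Nat.cast_pos.mpr hN
  set q := j / N
  set r := j % N
  have hr0 : 0 ≤ r := Int.emod_nonneg j hNZ.ne'
  have hrN : r < N := Int.emod_lt_of_pos j hNZ
  have hj' : j = r + q * N := by linarith [Int.emod_add_mul_ediv j N]
  have hdr : (d : ℤ) ≤ r := by simpa [hj', abs_of_nonneg hr0] using hj q
  have hdr' : (d : ℤ) ≤ N - r := by
    have := hj (q + 1)
    rwa [hj', show r + q * N - (q + 1) * N = -(N - r) by ring, abs_neg,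
      abs_of_pos (by linarith)] at this
  have hθ : π * j / N = π * r / N + q * π := by
    rw [hj']; push_cast; field_simp
  rw [hθ, cos_add_int_mul_pi, abs_mul, abs_zpow, abs_neg, abs_one, one_zpow, one_mul]
  apply abs_cos_le_cos_of_le_of_le_pi_sub (by positivity)
  · gcongr; exact_mod_cast hdr
  · rw [div_le_iff₀ hNR, sub_mul, div_mul_cancel₀ _ hNR.ne']
    have : (d : ℝ) + r ≤ N := by exact_mod_cast (by linarith : (d : ℤ) + r ≤ N)
    nlinarith [pi_pos]

theorem Complex.norm_exp_add_inv (x : ℝ) :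
    ‖exp (x * I) + (exp (x * I))⁻¹‖ = 2 * |Real.cos x| := by
  rw [← exp_neg, ← neg_mul, ← two_cos, ← ofReal_cos, ← ofReal_ofNat, ← ofReal_mul, norm_real,
    norm_mul]
  simp

theorem two_mul_sub_mul_ne_zero {i N : ℕ} (hN : 3 ≤ N) (hi : i.Coprime N) (k : ℤ) :
    2 * (i : ℤ) - k * N ≠ 0 := by
  intro h
  have hdvd : (N : ℤ) ∣ 2 * i := ⟨k, by linear_combination h⟩
  have h2 : (N : ℤ) ∣ 2 :=
    (Nat.isCoprime_iff_coprime.mpr hi.symm).dvd_of_dvd_mul_right hdvd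
  have := Int.le_of_dvd two_pos h2
  omega

theorem Complex.norm_exp_add_inv_eq_abs_cos (i N : ℕ) :
    ‖exp (2 * π * I * (i / N)) + (exp (2 * π * I * (i / N)))⁻¹‖
      = 2 * |Real.cos (2 * π * i / N)| := by
  rw [← norm_exp_add_inv]
  push_cast
  ring_nf

theorem Real.cos_pi_mul_div_nonneg {N d : ℕ} (hd : 2 * d ≤ N) : 0 ≤ cos (π * d / N) := by
  rcases Nat.eq_zero_or_pos N with rfl | hN
  · simp
  apply cos_nonneg_of_mem_Icc ⟨by have := pi_pos; linarith [show 0 ≤ π * d / N by positivity], ?_⟩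
  rw [div_le_div_iff₀ (by exact_mod_cast hN) two_pos]
  have : (2 * d : ℝ) ≤ N := by exact_mod_cast hd
  nlinarith [pi_pos]

theorem exists_isPrimitiveRoot_norm_add_inv_eq {N : ℕ} (hN : 3 ≤ N) :
    ∃ ζ : ℂ, IsPrimitiveRoot ζ N ∧
      ‖ζ + ζ⁻¹‖ = if Even N then 2 * cos (2 * π / N) else 2 * cos (π / N) := by
  have hN0 : N ≠ 0 := by omega
  split_ifs with he
  · refine ⟨_, Complex.isPrimitiveRoot_exp_of_coprime 1 N hN0 (Nat.coprime_one_left N), ?_⟩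
    have hcos := cos_pi_mul_div_nonneg (show 2 * 2 ≤ N by obtain ⟨m, rfl⟩ := he; omega)
    rw [Complex.norm_exp_add_inv_eq_abs_cos, Nat.cast_one, mul_one, abs_of_nonneg]
    all_goals push_cast at hcos ⊢; rwa [mul_comm 2 π]
  · obtain ⟨m, hm⟩ := Nat.not_even_iff_odd.mp he
    have hcop : (m + 1).Coprime N := by
      rw [hm, show 2 * m + 1 = m + 1 + m by ring, Nat.coprime_self_add_right]
      simp
    refine ⟨_, Complex.isPrimitiveRoot_exp_of_coprime (m + 1) N hN0 hcop, ?_⟩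
    have hangle : 2 * π * (m + 1 : ℕ) / N = π * (1 : ℕ) / N + (1 : ℤ) * π := by
      rw [hm]; push_cast; field_simp; ring
    rw [Complex.norm_exp_add_inv_eq_abs_cos, hangle, cos_add_int_mul_pi, zpow_one, neg_one_mul,
      abs_neg, abs_of_nonneg (cos_pi_mul_div_nonneg (by omega)), Nat.cast_one, mul_one]

theorem norm_add_inv_le_of_isPrimitiveRoot {N : ℕ} (hN : 3 ≤ N) {ζ : ℂ}
    (hζ : IsPrimitiveRoot ζ N) :
    ‖ζ + ζ⁻¹‖ ≤ if Even N then 2 * cos (2 * π / N) else 2 * cos (π / N) := by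
  obtain ⟨i, -, hi, rfl⟩ := (Complex.isPrimitiveRoot_iff ζ N (by omega)).mp hζ
  rw [Complex.norm_exp_add_inv_eq_abs_cos,
    show 2 * π * i / N = π * ((2 * i : ℤ) : ℝ) / N by push_cast; ring]
  split_ifs with he
  · have h := abs_cos_pi_mul_div_le (j := 2 * i) (d := 2) (N := N) ?_ fun k => ?_
    · rw [mul_comm 2 π]; push_cast at h ⊢; linarith
    · obtain ⟨m, rfl⟩ := he; omega
    · obtain ⟨m, hm⟩ := he
      obtain ⟨c, hc⟩ : (2 : ℤ) ∣ 2 * i - k * N := ⟨i - k * m, by rw [hm]; push_cast; ring⟩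
      have hc0 : c ≠ 0 := by
        rintro rfl
        exact two_mul_sub_mul_ne_zero hN hi k (by simpa using hc)
      rw [hc, abs_mul, abs_two, Nat.cast_ofNat]
      linarith [Int.one_le_abs hc0]
  · have h := abs_cos_pi_mul_div_le (j := 2 * i) (d := 1) (N := N) (by omega)
      fun k => by simpa using Int.one_le_abs (two_mul_sub_mul_ne_zero hN hi k)
    rw [Nat.cast_one, mul_one] at h
    linarith

theorem isGreatest_norm_add_inv_of_isPrimitiveRoot {N : ℕ} (hN : 3 ≤ N) :
    IsGreatest {r : ℝ | ∃ ζ : ℂ, IsPrimitiveRoot ζ N ∧ ‖ζ + ζ⁻¹‖ = r}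
      (if Even N then 2 * cos (2 * π / N) else 2 * cos (π / N)) :=
  ⟨exists_isPrimitiveRoot_norm_add_inv_eq hN,
    fun _ ⟨_, hζ, hr⟩ => hr ▸ norm_add_inv_le_of_isPrimitiveRoot hN hζ⟩

theorem two_mul_natDegree_le_natDegree_minpoly {P : ℤ[X]} (hmonic : P.Monic)
    (hirr : Irreducible P) {ζ : ℂ} (hζ : IsIntegral ℚ ζ) (hP : aeval (ζ + ζ⁻¹) P = 0)
    (hreal : (ζ + ζ⁻¹).im = 0) (him : ζ.im ≠ 0) :
    2 * P.natDegree ≤ (minpoly ℚ ζ).natDegree := by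
  have hmin : P.map (algebraMap ℤ ℚ) = minpoly ℚ (ζ + ζ⁻¹) :=
    minpoly.eq_of_irreducible_of_monic
      (hmonic.irreducible_iff_irreducible_map_fraction_map.mp hirr)
      (by rwa [aeval_map_algebraMap]) (hmonic.map _)
  rw [← hmonic.natDegree_map (algebraMap ℤ ℚ), hmin]
  refine two_mul_natDegree_minpoly_le hζ ?_
    fun h => him (Complex.im_eq_zero_of_mem_adjoin_simple hreal h)
  have hζmem := IntermediateField.mem_adjoin_simple_self ℚ ζ
  exact add_mem hζmem (inv_mem hζmem)

theorem norm_le_one_of_aeval_joukowski_eq_zero {P : ℤ[X]}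
    (hroots : ∀ z : ℂ, aeval z P = 0 → z.im = 0 ∧ ‖z‖ < 2) {w : ℂ}
    (hw : aeval w P.joukowski = 0) : ‖w‖ ≤ 1 := by
  rcases eq_or_ne w 0 with rfl | hw0
  · simp
  obtain ⟨hreal, hlt⟩ := hroots _ ((aeval_joukowski_eq_zero_iff hw0).mp hw)
  exact (Complex.norm_eq_one_and_im_ne_zero_of_add_inv_eq hw0 hreal hlt rfl).1.le

theorem exists_joukowski_eq_cyclotomic {P : ℤ[X]} (hmonic : P.Monic) (hirr : Irreducible P)
    (hroots : ∀ z : ℂ, aeval z P = 0 → z.im = 0 ∧ ‖z‖ < 2) :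
    ∃ N, 3 ≤ N ∧ P.joukowski = cyclotomic N ℤ := by
  have hJ := hmonic.joukowski
  have hdeg : 0 < P.natDegree := hmonic.natDegree_pos.mpr hirr.ne_one
  obtain ⟨α, hα⟩ := IsAlgClosed.exists_aeval_eq_zero ℂ P
    (by rw [degree_eq_natDegree hmonic.ne_zero]; exact_mod_cast hdeg.ne')
  obtain ⟨ζ, hζ0, rfl⟩ := exists_ne_zero_add_inv_eq α
  have hJζ : aeval ζ P.joukowski = 0 := (aeval_joukowski_eq_zero_iff hζ0).mpr hα
  have hζint : IsIntegral ℤ ζ := ⟨_, hJ, by rwa [← aeval_def]⟩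
  have hN : 0 < orderOf ζ := (hJ.isOfFinOrder_of_aeval_eq_zero
    (fun _ => norm_le_one_of_aeval_joukowski_eq_zero hroots) hζ0 hJζ).orderOf_pos
  have hprim := IsPrimitiveRoot.orderOf ζ
  have hdvd : cyclotomic (orderOf ζ) ℤ ∣ P.joukowski :=
    cyclotomic_eq_minpoly hprim hN ▸ minpoly.isIntegrallyClosed_dvd hζint hJζ
  obtain ⟨hreal, hlt⟩ := hroots _ hα
  have htot : 2 * P.natDegree ≤ (orderOf ζ).totient := by
    rw [← natDegree_cyclotomic _ ℚ, cyclotomic_eq_minpoly_rat hprim hN]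
    exact two_mul_natDegree_le_natDegree_minpoly hmonic hirr hζint.tower_top hα hreal
      (Complex.norm_eq_one_and_im_ne_zero_of_add_inv_eq hζ0 hreal hlt rfl).2
  refine ⟨orderOf ζ, ?_, (eq_of_monic_of_dvd_of_natDegree_le (cyclotomic.monic _ ℤ) hJ hdvd
    (by rw [hmonic.natDegree_joukowski, natDegree_cyclotomic]; exact htot))⟩
  by_contra! hN3
  interval_cases orderOf ζ <;> simp at htot <;> omega

theorem aeval_eq_zero_iff_of_joukowski_eq_cyclotomic {P : ℤ[X]} {N : ℕ} (hN : N ≠ 0)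
    (h : P.joukowski = cyclotomic N ℤ) {z : ℂ} :
    aeval z P = 0 ↔ ∃ ζ : ℂ, IsPrimitiveRoot ζ N ∧ z = ζ + ζ⁻¹ := by
  have : NeZero (N : ℂ) := ⟨Nat.cast_ne_zero.mpr hN⟩
  have hroot : ∀ ζ : ℂ, ζ ≠ 0 → (aeval (ζ + ζ⁻¹) P = 0 ↔ IsPrimitiveRoot ζ N) := fun ζ hζ => by
    rw [← aeval_joukowski_eq_zero_iff hζ, h, aeval_def, eval₂_eq_eval_map, map_cyclotomic,
      ← IsRoot, isRoot_cyclotomic_iff]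
  constructor
  · intro hz
    obtain ⟨ζ, hζ0, rfl⟩ := exists_ne_zero_add_inv_eq z
    exact ⟨ζ, (hroot ζ hζ0).mp hz, rfl⟩
  · rintro ⟨ζ, hζ, rfl⟩
    exact (hroot ζ (hζ.ne_zero hN)).mpr hζ

theorem kronecker_trace_cyclotomic (n : ℕ) (P : Polynomial ℤ)
    (hmonic : P.Monic) (hirr : Irreducible P) (hdeg : P.natDegree = n)
    (hroots : ∀ z : ℂ, aeval z P = 0 → z.im = 0 ∧ ‖z‖ < 2) :
    ∃ N : ℕ, 3 ≤ N ∧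
      (∀ z : ℂ, z ≠ 0 → z ^ n * aeval (z + z⁻¹) P = aeval z (cyclotomic N ℤ)) ∧
      (∀ z : ℂ, aeval z P = 0 → ∃ ζ : ℂ, IsPrimitiveRoot ζ N ∧ z = ζ + ζ⁻¹) ∧
      IsGreatest {r : ℝ | ∃ z : ℂ, aeval z P = 0 ∧ ‖z‖ = r}
        (if Even N then 2 * Real.cos (2 * π / N) else 2 * Real.cos (π / N)) := by
  subst hdeg
  obtain ⟨N, hN, hJ⟩ := exists_joukowski_eq_cyclotomic hmonic hirr hroots
  have hP (z : ℂ) := aeval_eq_zero_iff_of_joukowski_eq_cyclotomic (by omega) hJ (z := z)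
  refine ⟨N, hN, fun z hz => by rw [← hJ, aeval_joukowski P hz], fun z hz => (hP z).mp hz, ?_⟩
  convert isGreatest_norm_add_inv_of_isPrimitiveRoot hN using 1
  ext r
  simp only [Set.mem_ofPred_eq, hP]
  exact ⟨fun ⟨_, ⟨ζ, hζ, hz⟩, hr⟩ => ⟨ζ, hζ, hz ▸ hr⟩,
    fun ⟨ζ, hζ, hr⟩ => ⟨_, ⟨ζ, hζ, rfl⟩, hr⟩⟩
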